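/- The fermionic Stirling numbers of the second kind satisfy the following second-order recurrences: for every odd natural number j > 3 and every n ≥ 1, S_f(n+1, j) = S_f(n, j) + S_f(n, j−1); and for all natural numbers n ≥ 1 and j ≥ 2, S_f(n+1, j) = S_f(n, j) − S_f(n−1, j−2). -/

import Mathlib

open Finset

/-- `ε_n = (1 - (-1)^n)/2`, so `ε_n = 0` for even `n` and `ε_n = 1` for odd `n`. -/
def eps (n : ℕ) : ℤ := (1 - (-1 : ℤ) ^ n) / 2

/-- The fermionic Stirling numbers of the second kind, defined by the recurrence
`S_f(n+1,k) = (-1)^{k-1} S_f(n,k-1) + ε_k S_f(n,k)`, with `S_f(0,0) = 1`,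
`S_f(n,0) = 0` for `n ≥ 1`, and `S_f(n,k) = 0` for `k > n`. -/
def Sf : ℕ → ℕ → ℤ
  | 0, 0 => 1
  | 0, _ + 1 => 0
  | _ + 1, 0 => 0
  | n + 1, k + 1 => (-1 : ℤ) ^ k * Sf n k + eps (k + 1) * Sf n (k + 1)

/-!
In an odd column the defining recurrence reads `S_f(n+1,k+1) = S_f(n,k) + S_f(n,k+1)`, in an even
column it collapses to `S_f(n+1,k+1) = -S_f(n,k)`. Unfolding twice, split by the parity of the
column, gives the second-order recurrence.
-/

theorem eps_eq_zero_of_even {k : ℕ} (hk : Even k) : eps k = 0 := by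
  simp [eps, hk.neg_one_pow]

theorem eps_eq_one_of_odd {k : ℕ} (hk : Odd k) : eps k = 1 := by
  simp [eps, hk.neg_one_pow]

theorem Sf_succ_succ (n k : ℕ) :
    Sf (n + 1) (k + 1) = (-1 : ℤ) ^ k * Sf n k + eps (k + 1) * Sf n (k + 1) :=
  rfl

theorem Sf_succ_add_one_of_even (n : ℕ) {k : ℕ} (hk : Even k) :
    Sf (n + 1) (k + 1) = Sf n k + Sf n (k + 1) := by
  rw [Sf_succ_succ, hk.neg_one_pow, eps_eq_one_of_odd hk.add_one, one_mul, one_mul]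

theorem Sf_succ_add_one_of_odd (n : ℕ) {k : ℕ} (hk : Odd k) :
    Sf (n + 1) (k + 1) = -Sf n k := by
  rw [Sf_succ_succ, hk.neg_one_pow, eps_eq_zero_of_even hk.add_one, zero_mul, add_zero,
    neg_one_mul]

theorem Sf_add_two_add_two (m i : ℕ) : Sf (m + 2) (i + 2) = Sf (m + 1) (i + 2) - Sf m i := by
  rcases Nat.even_or_odd i with hi | hi
  · rw [Sf_succ_add_one_of_odd (m + 1) hi.add_one, Sf_succ_add_one_of_odd m hi.add_one,
      Sf_succ_add_one_of_even m hi]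
    ring
  · rw [Sf_succ_add_one_of_even (m + 1) hi.add_one, Sf_succ_add_one_of_odd m hi]
    ring

theorem Sf_second_order_recurrences :
    (∀ j : ℕ, Odd j → 3 < j → ∀ n : ℕ, 1 ≤ n → Sf (n + 1) j = Sf n j + Sf n (j - 1)) ∧
    (∀ n : ℕ, 1 ≤ n → ∀ j : ℕ, 2 ≤ j → Sf (n + 1) j = Sf n j - Sf (n - 1) (j - 2)) := by
  constructor
  · rintro j ⟨k, rfl⟩ - n -
    rw [Sf_succ_add_one_of_even n (even_two_mul k), Nat.add_sub_cancel, add_comm]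
  · intro n hn j hj
    obtain ⟨m, rfl⟩ := Nat.exists_eq_add_of_le' hn
    obtain ⟨i, rfl⟩ := Nat.exists_eq_add_of_le' hj
    simpa only [Nat.add_sub_cancel] using Sf_add_two_add_two m i
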